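/- arXiv:2402.03871 — 6 statements merged into one kernel-verified Lean document; each statement's English description precedes it below -/
import Mathlib

section
/- Let s ≠ 0 be a bitstring of length N and let f : (Fin N → Bool) → (Fin N → Bool) have Simon hidden string s. Then for every bitstring z of length N, ∑_{w} ( ∑_{x : f x = w} (-1)^{⟨x,z⟩} )² equals 2^(N+1) if ⟨z,s⟩ = 0 and equals 0 if ⟨z,s⟩ = 1. Equivalently, the measurement distribution p(z) = 2^{-2N} ∑_w ( ∑_{x : f x = w} (-1)^{⟨x,z⟩} )² of Simon's circuit for a 2:1 function is p(z) = 2^{1-N} on {z : ⟨z,s⟩ = 0} and 0 elsewhere. -/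
/-- The character `(-1)^{⟨x,z⟩}` for bitstrings `x, z`. -/
def simonChar {N : ℕ} (x z : Fin N → Bool) : ℤ :=
  ∏ i, (if x i && z i then -1 else 1)

/-- The F₂ inner product `⟨z,s⟩ = ⊕_i (z i ∧ s i)`, valued in `ZMod 2`. -/
def f2Inner {N : ℕ} (z s : Fin N → Bool) : ZMod 2 :=
  ∑ i, (if z i && s i then 1 else 0)

/-- `f` has Simon hidden string `s`: `f x = f y ↔ (y = x ∨ y = x ⊕ s)`. -/
def HasSimonString {N : ℕ} (f : (Fin N → Bool) → (Fin N → Bool)) (s : Fin N → Bool) : Prop :=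
  ∀ x y, f x = f y ↔ (y = x ∨ y = fun i => Bool.xor (x i) (s i))

lemma simonChar_mul_self {N : ℕ} (x z : Fin N → Bool) : simonChar x z * simonChar x z = 1 := by
  unfold simonChar
  rw [← Finset.prod_mul_distrib]
  apply Finset.prod_eq_one
  intro i _
  split_ifs <;> norm_num

lemma simonChar_xor {N : ℕ} (x s z : Fin N → Bool) :
    simonChar (fun i => Bool.xor (x i) (s i)) z = simonChar x z * simonChar s z := by
  unfold simonChar
  rw [← Finset.prod_mul_distrib]
  apply Finset.prod_congr rfl
  intro i _
  cases hx : x i <;> cases hs2 : s i <;> cases hz : z i <;> simp [hx, hs2, hz]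

lemma simonChar_eq_pow {N : ℕ} (s z : Fin N → Bool) :
    simonChar s z = (-1 : ℤ) ^ (Finset.univ.filter (fun i => z i && s i)).card := by
  unfold simonChar
  rw [Finset.prod_ite, Finset.prod_const, Finset.prod_const, one_pow, mul_one]
  congr 2
  apply Finset.filter_congr
  intro i _
  simp [Bool.and_comm]

lemma f2Inner_eq_card {N : ℕ} (z s : Fin N → Bool) :
    f2Inner z s = ((Finset.univ.filter (fun i => z i && s i)).card : ZMod 2) := by
  unfold f2Inner
  simp [Finset.sum_boole]

/-- For a 2:1 function with hidden string `s ≠ 0`, the Simon circuit measurement weight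
`∑_w (∑_{x : f x = w} (-1)^{⟨x,z⟩})²` is `2^(N+1)` when `⟨z,s⟩ = 0` and `0` when `⟨z,s⟩ = 1`. -/
theorem simon_two_to_one_distribution {N : ℕ} (s : Fin N → Bool) (hs : s ≠ fun _ => false)
    (f : (Fin N → Bool) → (Fin N → Bool)) (hf : HasSimonString f s)
    (z : Fin N → Bool) :
    (f2Inner z s = 0 →
      ∑ w : Fin N → Bool,
        (∑ x ∈ Finset.univ.filter (fun x => f x = w), simonChar x z) ^ 2 = 2 ^ (N + 1)) ∧
    (f2Inner z s = 1 →
      ∑ w : Fin N → Bool,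
        (∑ x ∈ Finset.univ.filter (fun x => f x = w), simonChar x z) ^ 2 = 0) := by
  classical
  -- main computation: the sum equals 2^N * (1 + simonChar s z)
  have key : ∑ w : Fin N → Bool,
      (∑ x ∈ Finset.univ.filter (fun x => f x = w), simonChar x z) ^ 2
      = 2 ^ N * (1 + simonChar s z) := by
    have step1 : ∀ w : Fin N → Bool,
        (∑ x ∈ Finset.univ.filter (fun x => f x = w), simonChar x z) ^ 2
        = ∑ x : Fin N → Bool, ∑ y : Fin N → Bool,
            (if f x = w then simonChar x z else 0) * (if f y = w then simonChar y z else 0) := by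
      intro w
      rw [sq, Finset.sum_filter, Finset.sum_mul_sum]
    calc ∑ w : Fin N → Bool,
        (∑ x ∈ Finset.univ.filter (fun x => f x = w), simonChar x z) ^ 2
        = ∑ w : Fin N → Bool, ∑ x : Fin N → Bool, ∑ y : Fin N → Bool,
            (if f x = w then simonChar x z else 0) * (if f y = w then simonChar y z else 0) := by
          exact Finset.sum_congr rfl fun w _ => step1 w
      _ = ∑ x : Fin N → Bool, ∑ y : Fin N → Bool, ∑ w : Fin N → Bool,
            (if f x = w then simonChar x z else 0) * (if f y = w then simonChar y z else 0) := by
          rw [Finset.sum_comm]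
          exact Finset.sum_congr rfl fun x _ => Finset.sum_comm
      _ = ∑ x : Fin N → Bool, ∑ y : Fin N → Bool,
            (if f x = f y then simonChar x z * simonChar y z else 0) := by
          apply Finset.sum_congr rfl; intro x _
          apply Finset.sum_congr rfl; intro y _
          rw [Finset.sum_eq_single (f x)]
          · simp [eq_comm]
          · intro w _ hw
            simp [Ne.symm hw]
          · simp
      _ = ∑ x : Fin N → Bool,
            (simonChar x z * simonChar x z
              + simonChar x z * simonChar (fun i => Bool.xor (x i) (s i)) z) := by
          apply Finset.sum_congr rfl; intro x _
          have hxs : (fun i => Bool.xor (x i) (s i)) ≠ x := by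
            intro h
            apply hs
            funext i
            have hh := congrFun h i
            cases hsi : s i
            · rfl
            · rw [hsi] at hh; simp at hh
          simp only [hf x]
          have : ∀ y : Fin N → Bool,
              (if y = x ∨ y = fun i => Bool.xor (x i) (s i)
                then simonChar x z * simonChar y z else 0)
              = (if y = x then simonChar x z * simonChar y z else 0)
                + (if y = (fun i => Bool.xor (x i) (s i))
                    then simonChar x z * simonChar y z else 0) := by
            intro y
            by_cases h1 : y = x <;> by_cases h2 : y = fun i => Bool.xor (x i) (s i) <;>
              simp_all
          rw [Finset.sum_congr rfl (fun y _ => this y), Finset.sum_add_distrib,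
            Finset.sum_ite_eq' _ x, Finset.sum_ite_eq' _ (fun i => Bool.xor (x i) (s i))]
          simp
      _ = 2 ^ N * (1 + simonChar s z) := by
          have : ∀ x : Fin N → Bool,
              simonChar x z * simonChar x z
                + simonChar x z * simonChar (fun i => Bool.xor (x i) (s i)) z
              = 1 + simonChar s z := by
            intro x
            rw [simonChar_xor, simonChar_mul_self, ← mul_assoc, simonChar_mul_self, one_mul]
          rw [Finset.sum_congr rfl (fun x _ => this x), Finset.sum_const,
            Finset.card_univ, nsmul_eq_mul]
          have hc : Fintype.card (Fin N → Bool) = 2 ^ N := by simp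
          rw [hc]
          push_cast
          ring
  constructor
  · intro h0
    have : simonChar s z = 1 := by
      rw [f2Inner_eq_card] at h0
      have heven : Even (Finset.univ.filter (fun i => z i && s i)).card := by
        exact even_iff_two_dvd.mpr ((ZMod.natCast_eq_zero_iff _ 2).mp h0)
      rw [simonChar_eq_pow, Even.neg_one_pow heven]
    rw [key, this]
    ring
  · intro h1
    have : simonChar s z = -1 := by
      rw [f2Inner_eq_card] at h1
      have hodd : Odd (Finset.univ.filter (fun i => z i && s i)).card := by
        rcases Nat.even_or_odd (Finset.univ.filter (fun i => z i && s i)).card with he | ho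
        · exfalso
          have : ((Finset.univ.filter (fun i => z i && s i)).card : ZMod 2) = 0 := by
            rw [ZMod.natCast_eq_zero_iff]
            exact he.two_dvd
          rw [this] at h1
          exact one_ne_zero h1.symm
        · exact ho
      rw [simonChar_eq_pow, Odd.neg_one_pow hodd]
    rw [key, this]
    ring
end

section
/- Let s ≠ 0 be a bitstring of length N and let f : (Fin N → Bool) → (Fin N → Bool) have Simon hidden string s. Then every bitstring z that occurs with nonzero probability in Simon's algorithm, i.e. every z with ∑_{w} ( ∑_{x : f x = w} (-1)^{⟨x,z⟩} )² ≠ 0, satisfies the linear equation ⟨z,s⟩ = 0 over F₂. -/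
lemma simonChar_neg_one {N : ℕ} (s z : Fin N → Bool) (h : f2Inner z s ≠ 0) :
    simonChar s z = -1 := by
  set c := (Finset.univ.filter (fun i : Fin N => z i && s i)).card with hc
  have h1 : simonChar s z = (-1 : ℤ) ^ c := by
    unfold simonChar
    have e1 : (∏ i : Fin N, if s i && z i then (-1 : ℤ) else 1)
        = ∏ i : Fin N, (-1 : ℤ) ^ (if z i && s i then 1 else 0) := by
      apply Finset.prod_congr rfl
      intro i _
      cases hz : z i <;> cases hsi : s i <;> simp [hz, hsi]
    rw [e1, Finset.prod_pow_eq_pow_sum, hc, Finset.card_filter]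
  have h2 : f2Inner z s = (c : ZMod 2) := by
    unfold f2Inner
    rw [hc, Finset.card_filter, Nat.cast_sum]
    apply Finset.sum_congr rfl
    intro i _
    cases z i <;> cases s i <;> simp
  have hodd : Odd c := by
    rw [Nat.odd_iff]
    by_contra hmod
    have : (2 : ℕ) ∣ c := by omega
    rw [h2, (ZMod.natCast_eq_zero_iff c 2).2 this] at h
    exact h rfl
  rw [h1, hodd.neg_one_pow]

/-- Every bitstring `z` occurring with nonzero probability in Simon's algorithm for a 2:1
function with hidden string `s ≠ 0` satisfies the linear equation `⟨z,s⟩ = 0` over F₂. -/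
theorem simon_samples_orthogonal_to_hidden_string {N : ℕ}
    (s : Fin N → Bool) (hs : s ≠ fun _ => false)
    (f : (Fin N → Bool) → (Fin N → Bool)) (hf : HasSimonString f s)
    (z : Fin N → Bool)
    (hz : ∑ w : Fin N → Bool,
      (∑ x ∈ Finset.univ.filter (fun x => f x = w), simonChar x z) ^ 2 ≠ 0) :
    f2Inner z s = 0 := by
  by_contra h
  have hchar := simonChar_neg_one s z h
  apply hz
  apply Finset.sum_eq_zero
  intro w _
  have key : (∑ x ∈ Finset.univ.filter (fun x => f x = w), simonChar x z) = 0 := by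
    set S := Finset.univ.filter (fun x => f x = w) with hS
    set σ : (Fin N → Bool) → (Fin N → Bool) := fun x => fun i => Bool.xor (x i) (s i) with hσ
    have hσσ : ∀ x, σ (σ x) = x := by
      intro x; funext i; simp [hσ, Bool.xor_assoc]
    have hbij : Function.Bijective σ :=
      Function.Involutive.bijective hσσ
    have hmem : ∀ x, x ∈ S ↔ σ x ∈ S := by
      intro x
      simp only [hS, Finset.mem_filter, Finset.mem_univ, true_and]
      constructor
      · intro hx
        rw [← hx]
        exact ((hf x (σ x)).2 (Or.inr rfl)).symm
      · intro hx
        rw [← hx]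
        exact (hf x (σ x)).2 (Or.inr rfl)
    have hsum : (∑ x ∈ S, simonChar (σ x) z) = ∑ x ∈ S, simonChar x z :=
      Finset.sum_bijective σ hbij hmem (fun x _ => rfl)
    have hneg : ∀ x ∈ S, simonChar (σ x) z = - simonChar x z := by
      intro x _
      rw [hσ, simonChar_xor, hchar]; ring
    rw [Finset.sum_congr rfl hneg, Finset.sum_neg_distrib] at hsum
    linarith
  rw [key]
  ring
end

section
/- Let N ≥ 1, let s ∈ (Fin N → ZMod 2) be nonzero, and let z₁, …, z_{N-1} ∈ (Fin N → ZMod 2) be linearly independent vectors satisfying ⟨z_i, s⟩ = 0 for all i. Then the solution set {v ∈ (Fin N → ZMod 2) : ⟨z_i, v⟩ = 0 for all i} is exactly {0, s}; in particular the classical post-processing of Simon's algorithm determines the hidden string s from N−1 independent samples. -/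
/-!
The solution set is the kernel of the `(N - 1) × N` matrix with rows `zᵢ`. Independence of the
rows makes its rank `N - 1`, so by rank–nullity the kernel has dimension at most one; it contains
the nonzero vector `s`, hence it is the line `𝔽₂ ∙ s = {0, s}`.
-/

open Module

theorem Matrix.finrank_ker_mulVecLin_add_card {K m n : Type*} [Field K] [Fintype m] [Fintype n]
    {A : Matrix m n K} (h : LinearIndependent K A.row) :
    finrank K (LinearMap.ker A.mulVecLin) + Fintype.card m = Fintype.card n := by
  rw [← h.rank_matrix, Matrix.rank, add_comm, LinearMap.finrank_range_add_finrank_ker,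
    finrank_fintype_fun_eq_card]

theorem Submodule.eq_span_singleton_of_finrank_le_one {K V : Type*} [DivisionRing K]
    [AddCommGroup V] [Module K V] {P : Submodule K V} [FiniteDimensional K P] {s : V}
    (hs : s ≠ 0) (hsP : s ∈ P) (hP : finrank K P ≤ 1) : P = K ∙ s :=
  (eq_of_le_of_finrank_le ((span_singleton_le_iff_mem s P).mpr hsP)
    (hP.trans (finrank_span_singleton hs).ge)).symm

theorem ZMod.coe_span_singleton_two {M : Type*} [AddCommGroup M] [Module (ZMod 2) M] (s : M) :
    ((ZMod 2 ∙ s : Submodule (ZMod 2) M) : Set M) = {0, s} := by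
  ext v
  simp only [SetLike.mem_coe, Submodule.mem_span_singleton, Set.mem_insert_iff,
    Set.mem_singleton_iff]
  constructor
  · rintro ⟨c, rfl⟩
    fin_cases c
    · exact Or.inl (zero_smul _ _)
    · exact Or.inr (one_smul _ _)
  · rintro (rfl | rfl)
    · exact ⟨0, zero_smul _ _⟩
    · exact ⟨1, one_smul _ _⟩

theorem simon_postprocessing_solution_set_general {N : ℕ}
    (s : Fin N → ZMod 2) (hs : s ≠ 0)
    (z : Fin (N - 1) → (Fin N → ZMod 2))
    (hli : LinearIndependent (ZMod 2) z)
    (hz : ∀ i, ∑ j, z i j * s j = 0) :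
    {v : Fin N → ZMod 2 | ∀ i, ∑ j, z i j * v j = 0} = {0, s} := by
  set A : Matrix (Fin (N - 1)) (Fin N) (ZMod 2) := Matrix.of z
  have hker : {v : Fin N → ZMod 2 | ∀ i, ∑ j, z i j * v j = 0}
      = (LinearMap.ker A.mulVecLin : Set (Fin N → ZMod 2)) := by
    ext v
    simp [A, funext_iff, Matrix.mulVec, dotProduct]
  have hs_ker : s ∈ LinearMap.ker A.mulVecLin := by
    rw [← SetLike.mem_coe, ← hker]
    exact hz
  have hdim : finrank (ZMod 2) (LinearMap.ker A.mulVecLin) ≤ 1 := by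
    have := Matrix.finrank_ker_mulVecLin_add_card (A := A) hli
    simp only [Fintype.card_fin] at this
    omega
  rw [hker, Submodule.eq_span_singleton_of_finrank_le_one hs hs_ker hdim,
    ZMod.coe_span_singleton_two]

/-- Given `N-1` linearly independent vectors over F₂ all orthogonal to a nonzero `s`,
the common solution set of `⟨z_i, v⟩ = 0` is exactly `{0, s}`: the classical
post-processing of Simon's algorithm recovers the hidden string. -/
theorem simon_postprocessing_solution_set {N : ℕ} (hN : 1 ≤ N)
    (s : Fin N → ZMod 2) (hs : s ≠ 0)
    (z : Fin (N - 1) → (Fin N → ZMod 2))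
    (hli : LinearIndependent (ZMod 2) z)
    (hz : ∀ i, ∑ j, z i j * s j = 0) :
    {v : Fin N → ZMod 2 | ∀ i, ∑ j, z i j * v j = 0} = {0, s} :=
  simon_postprocessing_solution_set_general s hs z hli hz
end

section
/- Let σ be a bijection of bitstrings of length N of bitflip-and-permutation form, σ(a) i = a (π i) XOR c i for a permutation π of Fin N and a fixed bitstring c, and let P_σ be the associated permutation matrix, (P_σ)_{a,b} = 1 if a = σ(b) and 0 otherwise. Then the equivariant embedding satisfies P_σ ρ(f) P_σᵀ = ρ(σ ∘ f) for every f : (Fin N → Bool) → (Fin N → Bool); i.e. the embedding is equivariant with respect to the bitflip-and-permutation symmetry group acting on function outputs. -/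
open Matrix

/-- The equivariant embedding `ρ(f)`, the diagonal matrix with entries `|f⁻¹(a)|/2^N`. -/
noncomputable def simonRho {N : ℕ} (f : (Fin N → Bool) → (Fin N → Bool)) :
    Matrix (Fin N → Bool) (Fin N → Bool) ℝ :=
  Matrix.of (fun a b : Fin N → Bool =>
    if a = b then ((Finset.univ.filter (fun x => f x = a)).card : ℝ) / 2 ^ N else 0)

/-- The embedding is equivariant under the bitflip-and-permutation group acting on
function outputs: `P_σ ρ(f) P_σᵀ = ρ(σ ∘ f)`. -/
theorem simon_embedding_equivariant {N : ℕ}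
    (π : Equiv.Perm (Fin N)) (c : Fin N → Bool)
    (σ : (Fin N → Bool) → (Fin N → Bool))
    (hσ : ∀ a i, σ a i = Bool.xor (a (π i)) (c i))
    (P : Matrix (Fin N → Bool) (Fin N → Bool) ℝ)
    (hP : ∀ a b, P a b = if a = σ b then 1 else 0)
    (f : (Fin N → Bool) → (Fin N → Bool)) :
    P * simonRho f * Pᵀ = simonRho (σ ∘ f) := by
  -- explicit inverse of σ
  set τ : (Fin N → Bool) → (Fin N → Bool) := fun a i => Bool.xor (a (π.symm i)) (c (π.symm i))
  have hστ : ∀ a, σ (τ a) = a := by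
    intro a; funext i
    simp [hσ, τ, Bool.xor_assoc]
  have hinj : Function.Injective σ := by
    intro a b h
    funext i
    have := congrFun h (π.symm i)
    simp [hσ] at this
    simpa using this
  ext a b
  simp only [Matrix.mul_apply, Matrix.transpose_apply, hP, simonRho, Matrix.of_apply]
  have h1 : ∀ y : Fin N → Bool,
      (∑ x : Fin N → Bool, (if a = σ x then (1:ℝ) else 0) *
        (if x = y then ((Finset.univ.filter (fun z => f z = x)).card : ℝ) / 2 ^ N else 0)) =
      (if a = σ y then (1:ℝ) else 0) *
        (((Finset.univ.filter (fun z => f z = y)).card : ℝ) / 2 ^ N) := by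
    intro y
    rw [Finset.sum_eq_single y]
    · simp
    · intro x _ hx; simp [hx]
    · simp
  simp only [h1]
  by_cases hab : a = b
  · subst hab
    rw [Finset.sum_eq_single (τ a)]
    · have : (Finset.univ.filter (fun z => f z = τ a)).card
          = (Finset.univ.filter (fun z => σ (f z) = a)).card := by
        congr 1
        apply Finset.filter_congr
        intro z _
        constructor
        · intro h; rw [h, hστ]
        · intro h; apply hinj; rw [h, hστ]
      simp [hστ, this, Function.comp]
    · intro y _ hy
      have : a ≠ σ y := by
        intro h
        exact hy (hinj (by rw [hστ, h]))
      simp [this]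
    · simp
  · have : ∀ y : Fin N → Bool, (if a = σ y then (1:ℝ) else 0) *
        (((Finset.univ.filter (fun z => f z = y)).card : ℝ) / 2 ^ N) *
        (if b = σ y then 1 else 0) = 0 := by
      intro y
      by_cases ha : a = σ y
      · have hb : b ≠ σ y := fun h => hab (ha.trans h.symm)
        simp [hb]
      · simp [ha]
    rw [Finset.sum_eq_zero]
    · simp [hab]
    · intro y _; exact this y
end

section
/- Let f : (Fin N → Bool) → (Fin N → Bool) and let h(a) = ∑_{∅ ≠ S ⊆ Fin N} ∏_{i ∈ S} (if a i then -1 else 1). Then ∑_{x} h(f x) = 2^N · (|f⁻¹(0)| − 1), where the sum is over all bitstrings x of length N. Consequently, the model expectation tr(ρ(f) O) = (1/2^N) ∑_x h(f x) equals 0 when f is bijective (1:1), and equals 1 (respectively −1) when f has Simon hidden string s ≠ 0 (2:1) and 0 lies (respectively does not lie) in the range of f. -/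
/-- The eigenvalue `h(a) = ∑_{∅≠S⊆Fin N} ∏_{i∈S} (-1)^{a i}` of the invariant observable
`O = ∑_i Z_i + ∑_{i<j} Z_i Z_j + … + Z_1⋯Z_N` on the basis state `|a⟩`. -/
def simonObs {N : ℕ} (a : Fin N → Bool) : ℤ :=
  ∑ S ∈ Finset.univ.powerset.filter (fun S : Finset (Fin N) => S.Nonempty),
    ∏ i ∈ S, (if a i then -1 else 1)

lemma simonObs_eq {N : ℕ} (a : Fin N → Bool) :
    simonObs a = (if a = (fun _ => false) then (2^N : ℤ) else 0) - 1 := by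
  have key : (∑ S ∈ (Finset.univ : Finset (Fin N)).powerset,
      ∏ i ∈ S, (if a i then (-1:ℤ) else 1)) =
      ∏ i : Fin N, ((if a i then (-1:ℤ) else 1) + 1) := by
    rw [Finset.prod_add]; simp
  have split : (Finset.univ : Finset (Fin N)).powerset =
      insert ∅ ((Finset.univ : Finset (Fin N)).powerset.filter (fun S => S.Nonempty)) := by
    ext S
    simp [Finset.eq_empty_or_nonempty S, or_comm]
  rw [split, Finset.sum_insert (by simp)] at key
  have : ∏ i : Fin N, ((if a i then (-1:ℤ) else 1) + 1) =
      if a = (fun _ => false) then (2^N : ℤ) else 0 := by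
    by_cases h : a = (fun _ => false)
    · subst h; simp
    · obtain ⟨i, hi⟩ : ∃ i, a i ≠ false := by
        by_contra hc; push_neg at hc; exact h (funext fun i => hc i)
      rw [Finset.prod_eq_zero (Finset.mem_univ i)]
      · simp [h]
      · simp [Bool.ne_false_iff.mp hi]
  rw [this] at key
  simp only [simonObs]
  simp only [Finset.prod_empty] at key
  linarith [key]

/-- First moment of the invariant observable: `∑_x h(f x) = 2^N (|f⁻¹(0)| − 1)`; hence the
model expectation `tr(ρ(f) O)` is `0` for 1:1 functions and `±1` for 2:1 functions,
according to whether `0` lies in the range of `f`. -/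
theorem simon_observable_expectation {N : ℕ}
    (f : (Fin N → Bool) → (Fin N → Bool)) :
    (∑ x : Fin N → Bool, simonObs (f x)) =
        2 ^ N * (((Finset.univ.filter (fun x => f x = fun _ => false)).card : ℤ) - 1) ∧
    (Function.Bijective f →
      ((∑ x : Fin N → Bool, simonObs (f x) : ℤ) : ℝ) / 2 ^ N = 0) ∧
    (∀ s : Fin N → Bool, s ≠ (fun _ => false) → HasSimonString f s →
      (((fun _ => false) ∈ Set.range f →
        ((∑ x : Fin N → Bool, simonObs (f x) : ℤ) : ℝ) / 2 ^ N = 1) ∧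
      ((fun _ => false) ∉ Set.range f →
        ((∑ x : Fin N → Bool, simonObs (f x) : ℤ) : ℝ) / 2 ^ N = -1))) := by
  have hcard : (Finset.univ : Finset (Fin N → Bool)).card = 2 ^ N := by
    simp [Finset.card_univ]
  have hmain : (∑ x : Fin N → Bool, simonObs (f x)) =
      2 ^ N * (((Finset.univ.filter (fun x => f x = fun _ => false)).card : ℤ) - 1) := by
    simp only [simonObs_eq]
    rw [Finset.sum_sub_distrib, Finset.sum_const, ← Finset.sum_filter, Finset.sum_const,
      hcard]
    push_cast
    ring
  have hdiv : ∀ c : ℤ,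
      (Finset.univ.filter (fun x => f x = fun _ => false)).card = c →
      ((∑ x : Fin N → Bool, simonObs (f x) : ℤ) : ℝ) / 2 ^ N = (c : ℝ) - 1 := by
    intro c hc
    rw [hmain, hc]
    push_cast
    field_simp

  refine ⟨hmain, ?_, ?_⟩
  · intro hb
    obtain ⟨a, ha⟩ := hb.surjective (fun _ => false)
    have h1 : (Finset.univ.filter (fun x => f x = fun _ => false)) = {a} := by
      ext x
      simp only [Finset.mem_filter, Finset.mem_univ, true_and, Finset.mem_singleton]
      constructor
      · intro h; exact hb.injective (h.trans ha.symm)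
      · rintro rfl; exact ha
    rw [hdiv 1 (by rw [h1]; simp)]; ring
  · intro s hs hsimon
    constructor
    · intro ⟨a, ha⟩
      have hne : a ≠ (fun i => Bool.xor (a i) (s i)) := by
        intro h
        apply hs
        funext i
        have := congrFun h i
        cases hsi : s i <;> cases hai : a i <;> simp [hsi, hai] at this ⊢
      have h1 : (Finset.univ.filter (fun x => f x = fun _ => false)) =
          {a, fun i => Bool.xor (a i) (s i)} := by
        ext x
        simp only [Finset.mem_filter, Finset.mem_univ, true_and, Finset.mem_insert,
          Finset.mem_singleton]
        constructor
        · intro h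
          exact (hsimon a x).mp (ha.trans h.symm)
        · intro h
          rcases h with rfl | rfl
          · exact ha
          · exact ((hsimon a _).mpr (Or.inr rfl)).symm.trans ha
      rw [hdiv 2 (by rw [h1, Finset.card_insert_of_notMem (by simpa using hne)]; simp)]
      ring
    · intro hnr
      have h1 : (Finset.univ.filter (fun x => f x = fun _ => false)) = ∅ := by
        ext x
        simp only [Finset.mem_filter, Finset.mem_univ, true_and, Finset.notMem_empty,
          iff_false]
        intro h
        exact hnr ⟨x, h⟩
      rw [hdiv 0 (by rw [h1]; simp)]
      ring
end

section
/- Let f : (Fin N → Bool) → (Fin N → Bool), let h(a) = ∑_{∅ ≠ S ⊆ Fin N} ∏_{i ∈ S} (if a i then -1 else 1), and let k = |f⁻¹(0)|. Then the second moment satisfies ∑_{x} h(f x)² = 2^N · (k·2^N − 2k + 1). Consequently the variance of the invariant observable O in the state ρ(f), namely (1/2^N)∑_x h(f x)² − ((1/2^N)∑_x h(f x))², equals 2^N − 1 when f is bijective, and equals 2^{N+1} − 4 when f has Simon hidden string s ≠ 0 with 0 in the range of f; hence the feature vector (mean, variance) separates 1:1 from 2:1 functions. -/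
lemma simonObs_val {N : ℕ} (a : Fin N → Bool) :
    simonObs a = if a = (fun _ => false) then 2 ^ N - 1 else -1 := by
  have hfull : ∑ S ∈ (Finset.univ : Finset (Fin N)).powerset,
      ∏ i ∈ S, (if a i then (-1 : ℤ) else 1)
      = ∏ i : Fin N, ((if a i then (-1 : ℤ) else 1) + 1) := by
    rw [Finset.prod_add]
    exact Finset.sum_congr rfl fun S _ => by simp
  have hsplit : simonObs a
      = (∑ S ∈ (Finset.univ : Finset (Fin N)).powerset,
          ∏ i ∈ S, (if a i then (-1 : ℤ) else 1)) - 1 := by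
    unfold simonObs
    rw [← Finset.sum_filter_add_sum_filter_not
      ((Finset.univ : Finset (Fin N)).powerset) (fun S => S.Nonempty)]
    have : ((Finset.univ : Finset (Fin N)).powerset.filter
        (fun S => ¬ S.Nonempty)) = {∅} := by
      ext S; simp [Finset.not_nonempty_iff_eq_empty]
    rw [this]
    simp
  rw [hsplit, hfull]
  by_cases h : a = (fun _ => false)
  · subst h; simp
  · simp only [if_neg h]
    have : ∃ i, a i = true := by
      by_contra hc
      push_neg at hc
      exact h (funext fun i => by simpa using hc i)
    obtain ⟨i, hi⟩ := this
    rw [Finset.prod_eq_zero (Finset.mem_univ i) (by simp [hi])]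
    ring

lemma sums {N : ℕ} (f : (Fin N → Bool) → (Fin N → Bool)) (k : ℕ)
    (hk : k = (Finset.univ.filter (fun x => f x = fun _ => false)).card) :
    (∑ x : Fin N → Bool, (simonObs (f x)) ^ 2)
      = 2 ^ N * ((k : ℤ) * 2 ^ N - 2 * k + 1) ∧
    (∑ x : Fin N → Bool, simonObs (f x)) = 2 ^ N * ((k : ℤ) - 1) := by
  have hcard : (Finset.univ : Finset (Fin N → Bool)).card = 2 ^ N := by
    simp [Fintype.card_fun]
  have hnot : (Finset.univ.filter (fun x => ¬ f x = fun _ => false)).card = 2 ^ N - k := by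
    have := Finset.card_filter_add_card_filter_not (s := (Finset.univ : Finset (Fin N → Bool))) (p := fun x => f x = fun _ => false)
    omega
  have hk2N : k ≤ 2 ^ N := by
    rw [hk, ← hcard]; exact Finset.card_filter_le _ _
  constructor
  · have : (∑ x : Fin N → Bool, (simonObs (f x)) ^ 2)
        = ∑ x : Fin N → Bool, (if f x = (fun _ => false) then ((2:ℤ) ^ N - 1) ^ 2 else 1) := by
      refine Finset.sum_congr rfl fun x _ => ?_
      rw [simonObs_val]
      by_cases h : f x = fun _ => false <;> simp [h]
    rw [this, Finset.sum_ite, Finset.sum_const, Finset.sum_const, ← hk, hnot]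
    have : ((2 ^ N - k : ℕ) : ℤ) = 2 ^ N - k := by
      push_cast [Nat.cast_sub hk2N]; ring
    simp only [nsmul_eq_mul, smul_eq_mul, this]
    ring
  · have : (∑ x : Fin N → Bool, simonObs (f x))
        = ∑ x : Fin N → Bool, (if f x = (fun _ => false) then ((2:ℤ) ^ N - 1) else -1) := by
      refine Finset.sum_congr rfl fun x _ => ?_
      rw [simonObs_val]
    rw [this, Finset.sum_ite, Finset.sum_const, Finset.sum_const, ← hk, hnot]
    have : ((2 ^ N - k : ℕ) : ℤ) = 2 ^ N - k := by
      push_cast [Nat.cast_sub hk2N]; ring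
    simp only [nsmul_eq_mul, smul_eq_mul, this]
    ring

/-- Second moment `∑_x h(f x)² = 2^N (k·2^N − 2k + 1)` with `k = |f⁻¹(0)|`; hence the variance
of the invariant observable under `ρ(f)` is `2^N − 1` for bijective `f` and `2^(N+1) − 4` for a
2:1 function with `0` in its range, separating the two classes. -/
theorem simon_observable_variance {N : ℕ}
    (f : (Fin N → Bool) → (Fin N → Bool)) (k : ℕ)
    (hk : k = (Finset.univ.filter (fun x => f x = fun _ => false)).card) :
    (∑ x : Fin N → Bool, (simonObs (f x)) ^ 2) =
        2 ^ N * ((k : ℤ) * 2 ^ N - 2 * k + 1) ∧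
    (Function.Bijective f →
      ((∑ x : Fin N → Bool, (simonObs (f x)) ^ 2 : ℤ) : ℝ) / 2 ^ N -
        (((∑ x : Fin N → Bool, simonObs (f x) : ℤ) : ℝ) / 2 ^ N) ^ 2 = 2 ^ N - 1) ∧
    (∀ s : Fin N → Bool, s ≠ (fun _ => false) → HasSimonString f s →
      (fun _ => false) ∈ Set.range f →
      ((∑ x : Fin N → Bool, (simonObs (f x)) ^ 2 : ℤ) : ℝ) / 2 ^ N -
        (((∑ x : Fin N → Bool, simonObs (f x) : ℤ) : ℝ) / 2 ^ N) ^ 2 = 2 ^ (N + 1) - 4) := by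
  obtain ⟨h2, h1⟩ := sums f k hk
  have hT : (0:ℝ) < 2 ^ N := by positivity
  have variance : ∀ m : ℕ, k = m →
      ((∑ x : Fin N → Bool, (simonObs (f x)) ^ 2 : ℤ) : ℝ) / 2 ^ N -
        (((∑ x : Fin N → Bool, simonObs (f x) : ℤ) : ℝ) / 2 ^ N) ^ 2
      = (m : ℝ) * 2 ^ N - 2 * m + 1 - ((m : ℝ) - 1) ^ 2 := by
    intro m hm
    subst hm
    rw [h1, h2]
    push_cast
    field_simp
  refine ⟨h2, fun hbij => ?_, fun s hs hsim h0 => ?_⟩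
  · have hk1 : k = 1 := by
      rw [hk]
      have : (Finset.univ.filter (fun x => f x = fun _ => false))
          = {Function.invFun f (fun _ => false)} := by
        ext x
        simp only [Finset.mem_filter, Finset.mem_univ, true_and, Finset.mem_singleton]
        constructor
        · intro hx
          apply hbij.injective
          rw [hx, Function.invFun_eq (hbij.surjective _)]
        · rintro rfl
          exact Function.invFun_eq (hbij.surjective _)
      rw [this]; simp
    rw [variance 1 hk1]
    push_cast
    ring
  · have hk2 : k = 2 := by
      obtain ⟨x₀, hx₀⟩ := h0
      have hfilter : (Finset.univ.filter (fun x => f x = fun _ => false))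
          = {x₀, fun i => Bool.xor (x₀ i) (s i)} := by
        ext x
        simp only [Finset.mem_filter, Finset.mem_univ, true_and, Finset.mem_insert,
          Finset.mem_singleton]
        constructor
        · intro hx
          have : f x₀ = f x := by rw [hx₀, hx]
          rcases (hsim x₀ x).mp this with h | h
          · exact Or.inl h
          · exact Or.inr h
        · rintro (rfl | rfl)
          · exact hx₀
          · have := (hsim x₀ (fun i => Bool.xor (x₀ i) (s i))).mpr (Or.inr rfl)
            rw [← this, hx₀]
      have hne : x₀ ≠ (fun i => Bool.xor (x₀ i) (s i)) := by
        intro hc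
        apply hs
        funext i
        have := congrFun hc i
        cases hsi : s i <;> cases hx0i : x₀ i <;> simp [hsi, hx0i] at this ⊢
      rw [hk, hfilter, Finset.card_insert_of_notMem (by simpa using hne)]
      simp
    rw [variance 2 hk2]
    push_cast
    ring
end
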